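/- With K = K^{(i)}(S) as above (K_{kk}=1 for k∉{i,i+1}, K_{i,i+1}=K_{i+1,i}=1, K_{ii}=−s_{i,i+1}, K_{i+1,i+1}=0, other entries 0), the matrix S^{σ_i} = K S K is again upper triangular with unit diagonal, provided S is upper triangular with unit diagonal. -/
import Mathlib

/-- Auxiliary lemma: abstract form of the braid action computation, with `a` and `b = a+1`
given as elements of `Fin n` and the rows of `K` described directly. -/
lemma braid_aux {n : ℕ} (a b : Fin n) (hab : (a : ℕ) + 1 = (b : ℕ))
    (S K : Matrix (Fin n) (Fin n) ℂ)
    (hupper : ∀ k l : Fin n, l < k → S k l = 0)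
    (hdiag : ∀ k : Fin n, S k k = 1)
    (hKa : ∀ m : Fin n, K a m = if m = a then -S a b else if m = b then 1 else 0)
    (hKb : ∀ m : Fin n, K b m = if m = a then 1 else 0)
    (hKo : ∀ k m : Fin n, k ≠ a → k ≠ b → K k m = if k = m then 1 else 0)
    (hKsymm : ∀ k l : Fin n, K k l = K l k) :
    (∀ k l : Fin n, l < k → (K * S * K) k l = 0) ∧
    (∀ k : Fin n, (K * S * K) k k = 1) := by
  have hab_lt : a < b := by rw [Fin.lt_def]; omega
  have hab_ne : a ≠ b := ne_of_lt hab_lt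
  have hrow : ∀ (v : Fin n → ℂ) (k : Fin n),
      (∑ m, K k m * v m) = if k = a then -S a b * v a + v b
        else if k = b then v a else v k := by
    intro v k
    by_cases hka : k = a
    · subst hka
      rw [if_pos rfl]
      have key : ∀ m : Fin n, K k m * v m
          = (if m = k then -S k b * v m else 0) + (if m = b then v m else 0) := by
        intro m
        rw [hKa]
        rcases eq_or_ne m k with rfl | h1
        · rw [if_pos rfl, if_pos rfl, if_neg hab_ne, add_zero]
        · rcases eq_or_ne m b with rfl | h2
          · rw [if_neg h1, if_neg h1, if_pos rfl, if_pos rfl, one_mul, zero_add]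
          · rw [if_neg h1, if_neg h2, if_neg h1, if_neg h2, add_zero, zero_mul]
      simp only [key, Finset.sum_add_distrib, Finset.sum_ite_eq', Finset.mem_univ, if_true]
    · by_cases hkb : k = b
      · subst hkb
        rw [if_neg hka, if_pos rfl]
        have key : ∀ m : Fin n, K k m * v m = if m = a then v m else 0 := by
          intro m
          rw [hKb]
          rcases eq_or_ne m a with rfl | h1
          · rw [if_pos rfl, if_pos rfl, one_mul]
          · rw [if_neg h1, if_neg h1, zero_mul]
        simp only [key, Finset.sum_ite_eq', Finset.mem_univ, if_true]
      · rw [if_neg hka, if_neg hkb]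
        have key : ∀ m : Fin n, K k m * v m = if m = k then v m else 0 := by
          intro m
          rw [hKo k m hka hkb]
          rcases eq_or_ne m k with rfl | h1
          · rw [if_pos rfl, if_pos rfl, one_mul]
          · rw [if_neg (fun h => h1 h.symm), if_neg h1, zero_mul]
        simp only [key, Finset.sum_ite_eq', Finset.mem_univ, if_true]
  have hcol : ∀ (v : Fin n → ℂ) (l : Fin n),
      (∑ m, v m * K m l) = if l = a then -S a b * v a + v b
        else if l = b then v a else v l := by
    intro v l
    rw [← hrow v l]
    congr 1
    ext m
    rw [hKsymm, mul_comm]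
  have hKS : ∀ k p : Fin n, (K * S) k p
      = if k = a then -S a b * S a p + S b p else if k = b then S a p else S k p := by
    intro k p
    rw [Matrix.mul_apply]
    exact hrow (fun m => S m p) k
  have hKSK : ∀ k l : Fin n, (K * S * K) k l
      = if l = a then -S a b * (K * S) k a + (K * S) k b
        else if l = b then (K * S) k a else (K * S) k l := by
    intro k l
    rw [Matrix.mul_apply]
    exact hcol (fun m => (K * S) k m) l
  constructor
  · intro k l hlk
    rw [hKSK]
    by_cases hla : l = a
    · subst hla
      rw [if_pos rfl]
      by_cases hkb : k = b
      · subst hkb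
        rw [hKS, hKS, if_neg (Ne.symm hab_ne), if_pos rfl, if_neg (Ne.symm hab_ne),
          if_pos rfl, hdiag]
        ring
      · have hka : k ≠ l := fun h => absurd (h ▸ hlk) (lt_irrefl _)
        have hbk : b < k := by
          have h1 : (l : ℕ) < (k : ℕ) := hlk
          have h2 : (k : ℕ) ≠ (b : ℕ) := fun h => hkb (Fin.ext h)
          rw [Fin.lt_def]
          omega
        rw [hKS, hKS, if_neg hka, if_neg hkb, if_neg hka, if_neg hkb,
          hupper k l (lt_trans hab_lt hbk), hupper k b hbk]
        ring
    · by_cases hlb : l = b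
      · subst hlb
        rw [if_neg hla, if_pos rfl]
        have hka : k ≠ a := fun h => absurd (h ▸ hlk) (not_lt_of_gt hab_lt)
        have hkb : k ≠ l := fun h => absurd (h ▸ hlk) (lt_irrefl _)
        rw [hKS, if_neg hka, if_neg hkb]
        exact hupper k a (lt_trans hab_lt hlk)
      · rw [if_neg hla, if_neg hlb, hKS]
        by_cases hka : k = a
        · subst hka
          rw [if_pos rfl, hupper k l hlk, hupper b l (lt_trans hlk hab_lt)]
          ring
        · by_cases hkb : k = b
          · subst hkb
            rw [if_neg hka, if_pos rfl]
            have hla' : l < a := by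
              have h1 : (l : ℕ) < (k : ℕ) := hlk
              have h2 : (l : ℕ) ≠ (a : ℕ) := fun h => hla (Fin.ext h)
              rw [Fin.lt_def]
              omega
            exact hupper a l hla'
          · rw [if_neg hka, if_neg hkb]
            exact hupper k l hlk
  · intro k
    rw [hKSK]
    by_cases hka : k = a
    · subst hka
      rw [if_pos rfl, hKS, hKS, if_pos rfl, if_pos rfl, hdiag, hdiag,
        hupper b k hab_lt]
      ring
    · by_cases hkb : k = b
      · subst hkb
        rw [if_neg hka, if_pos rfl, hKS, if_neg hka, if_pos rfl, hdiag]
      · rw [if_neg hka, if_neg hkb, hKS, if_neg hka, if_neg hkb, hdiag]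

/-- With K = K^{(i)}(S) as in the braid group action on Stokes matrices, if S is upper
triangular with unit diagonal then so is S^{σ_i} = K·S·K. -/
theorem braid_action_preserves_stokes (n i : ℕ) (hi : i + 1 < n)
    (S : Matrix (Fin n) (Fin n) ℂ)
    (hupper : ∀ k l : Fin n, l < k → S k l = 0)
    (hdiag : ∀ k : Fin n, S k k = 1)
    (K : Matrix (Fin n) (Fin n) ℂ)
    (hK : ∀ k l : Fin n, K k l =
      if (k : ℕ) = i ∧ (l : ℕ) = i then
        -S ⟨i, Nat.lt_of_succ_lt hi⟩ ⟨i + 1, hi⟩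
      else if ((k : ℕ) = i ∧ (l : ℕ) = i + 1) ∨ ((k : ℕ) = i + 1 ∧ (l : ℕ) = i) then 1
      else if k = l ∧ (k : ℕ) ≠ i ∧ (k : ℕ) ≠ i + 1 then 1
      else 0) :
    (∀ k l : Fin n, l < k → (K * S * K) k l = 0) ∧
    (∀ k : Fin n, (K * S * K) k k = 1) := by
  refine braid_aux ⟨i, Nat.lt_of_succ_lt hi⟩ ⟨i + 1, hi⟩ rfl S K hupper hdiag ?_ ?_ ?_ ?_
  · intro m
    rw [hK]
    simp only [Fin.ext_iff, Fin.val_mk, true_and, and_true, false_and, and_false,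
      false_or, or_false, ne_eq, not_true, and_false, false_and]
    split_ifs <;> first | rfl | omega | exact ‹False›.elim
  · intro m
    rw [hK]
    simp only [Fin.ext_iff, Fin.val_mk, true_and, and_true, false_and, and_false,
      false_or, or_false, ne_eq, not_true, and_false, false_and]
    split_ifs <;> first | rfl | omega | exact ‹False›.elim
  · intro k m hka hkb
    rw [hK]
    have hka' : (k : ℕ) ≠ i := fun h => hka (Fin.ext h)
    have hkb' : (k : ℕ) ≠ i + 1 := fun h => hkb (Fin.ext h)
    simp only [Fin.ext_iff, Fin.val_mk, true_and, and_true, false_and, and_false,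
      false_or, or_false, ne_eq, not_true, and_false, false_and]
    split_ifs <;> first | rfl | omega | exact ‹False›.elim
  · intro k l
    rw [hK k l, hK l k]
    simp only [Fin.ext_iff, Fin.val_mk, true_and, and_true, false_and, and_false,
      false_or, or_false, ne_eq, not_true, and_false, false_and]
    split_ifs <;> first | rfl | omega | exact ‹False›.elim
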